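/- arXiv:1403.0028 — 5 statements merged into one kernel-verified Lean document; each statement's English description precedes it below -/
import Mathlib

section
/- Let u, v : ℝ × ℝ → ℝ be smooth functions satisfying the first-order system u_x + v_x = √2 · e^((u−v)/2) and u_y − v_y = √2 · e^((u+v)/2). Then u satisfies the Liouville equation u_xy = e^u. -/
open Real

/-- Partial derivative in the first (x) coordinate. -/
noncomputable def px (f : ℝ × ℝ → ℝ) (p : ℝ × ℝ) : ℝ := fderiv ℝ f p (1, 0)

/-- Partial derivative in the second (y) coordinate. -/
noncomputable def py (f : ℝ × ℝ → ℝ) (p : ℝ × ℝ) : ℝ := fderiv ℝ f p (0, 1)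

/-- Derivative of `q ↦ fderiv f q a`. -/
lemma aux_hasFDeriv (f : ℝ × ℝ → ℝ) (hf : ContDiff ℝ (⊤ : ℕ∞) f) (p a : ℝ × ℝ) :
    HasFDerivAt (fun q => fderiv ℝ f q a)
      ((ContinuousLinearMap.apply ℝ ℝ a).comp (fderiv ℝ (fderiv ℝ f) p)) p := by
  exact (ContinuousLinearMap.apply ℝ ℝ a).hasFDerivAt.comp p
    (((hf.fderiv_right (m := 1) (WithTop.coe_le_coe.mpr le_top)).differentiable one_ne_zero p).hasFDerivAt)

lemma aux_symm (f : ℝ × ℝ → ℝ) (hf : ContDiff ℝ (⊤ : ℕ∞) f) (p a b : ℝ × ℝ) :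
    fderiv ℝ (fderiv ℝ f) p a b = fderiv ℝ (fderiv ℝ f) p b a :=
  second_derivative_symmetric (fun y => (hf.differentiable (by simp) y).hasFDerivAt)
    (((hf.fderiv_right (m := 1) (WithTop.coe_le_coe.mpr le_top)).differentiable one_ne_zero p).hasFDerivAt) a b

/-- If smooth `u, v` satisfy the Bäcklund system
`u_x + v_x = √2 e^((u-v)/2)` and `u_y - v_y = √2 e^((u+v)/2)`,
then `u` satisfies the Liouville equation `u_xy = e^u`. -/
theorem stmt0 (u v : ℝ × ℝ → ℝ) (hu : ContDiff ℝ (⊤ : ℕ∞) u) (hv : ContDiff ℝ (⊤ : ℕ∞) v)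
    (h1 : ∀ p, px u p + px v p = Real.sqrt 2 * Real.exp ((u p - v p) / 2))
    (h2 : ∀ p, py u p - py v p = Real.sqrt 2 * Real.exp ((u p + v p) / 2)) :
    ∀ p, py (px u) p = Real.exp (u p) := by
  intro p
  have hdu : Differentiable ℝ u := hu.differentiable (by simp)
  have hdv : Differentiable ℝ v := hv.differentiable (by simp)
  set X : ℝ × ℝ := (1, 0)
  set Y : ℝ × ℝ := (0, 1)
  -- derivative of LHS of h1
  have hL1 : HasFDerivAt (fun q => px u q + px v q)
      ((ContinuousLinearMap.apply ℝ ℝ X).comp (fderiv ℝ (fderiv ℝ u) p)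
        + (ContinuousLinearMap.apply ℝ ℝ X).comp (fderiv ℝ (fderiv ℝ v) p)) p :=
    (aux_hasFDeriv u hu p X).add (aux_hasFDeriv v hv p X)
  -- derivative of RHS of h1
  have hR1 : HasFDerivAt (fun q => Real.sqrt 2 * Real.exp ((u q - v q) / 2))
      ((Real.sqrt 2) • ((Real.exp ((u p - v p) / 2)) •
        ((2:ℝ)⁻¹ • (fderiv ℝ u p - fderiv ℝ v p)))) p := by
    have h0 : HasFDerivAt (fun q => (u q - v q) / 2)
        ((2:ℝ)⁻¹ • (fderiv ℝ u p - fderiv ℝ v p)) p := by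
      have := ((hdu p).hasFDerivAt.sub (hdv p).hasFDerivAt).const_smul (2:ℝ)⁻¹
      refine this.congr_of_eventuallyEq (Filter.Eventually.of_forall fun q => ?_)
      simp only [Pi.smul_apply, Pi.sub_apply, Pi.add_apply, smul_eq_mul]
      ring
    have := h0.exp.const_smul (Real.sqrt 2)
    refine this.congr_of_eventuallyEq (Filter.Eventually.of_forall fun q => ?_)
    simp only [Pi.smul_apply, Pi.sub_apply, Pi.add_apply, smul_eq_mul]
  have hfun1 : (fun q => px u q + px v q) = fun q => Real.sqrt 2 * Real.exp ((u q - v q) / 2) :=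
    funext h1
  have e1 := hL1.unique (hfun1 ▸ hR1)
  have e1' := congrArg (fun L => L Y) e1
  simp only [ContinuousLinearMap.add_apply, ContinuousLinearMap.comp_apply,
    ContinuousLinearMap.apply_apply, ContinuousLinearMap.smul_apply,
    ContinuousLinearMap.sub_apply, smul_eq_mul] at e1'
  -- e1' : fderiv (fderiv u) p Y X + fderiv (fderiv v) p Y X = √2 * (exp(...) * (2⁻¹ * (py u p - py v p)))
  -- derivative of h2
  have hL2 : HasFDerivAt (fun q => py u q - py v q)
      ((ContinuousLinearMap.apply ℝ ℝ Y).comp (fderiv ℝ (fderiv ℝ u) p)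
        - (ContinuousLinearMap.apply ℝ ℝ Y).comp (fderiv ℝ (fderiv ℝ v) p)) p :=
    (aux_hasFDeriv u hu p Y).sub (aux_hasFDeriv v hv p Y)
  have hR2 : HasFDerivAt (fun q => Real.sqrt 2 * Real.exp ((u q + v q) / 2))
      ((Real.sqrt 2) • ((Real.exp ((u p + v p) / 2)) •
        ((2:ℝ)⁻¹ • (fderiv ℝ u p + fderiv ℝ v p)))) p := by
    have h0 : HasFDerivAt (fun q => (u q + v q) / 2)
        ((2:ℝ)⁻¹ • (fderiv ℝ u p + fderiv ℝ v p)) p := by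
      have := ((hdu p).hasFDerivAt.add (hdv p).hasFDerivAt).const_smul (2:ℝ)⁻¹
      refine this.congr_of_eventuallyEq (Filter.Eventually.of_forall fun q => ?_)
      simp only [Pi.smul_apply, Pi.sub_apply, Pi.add_apply, smul_eq_mul]
      ring
    have := h0.exp.const_smul (Real.sqrt 2)
    refine this.congr_of_eventuallyEq (Filter.Eventually.of_forall fun q => ?_)
    simp only [Pi.smul_apply, Pi.sub_apply, Pi.add_apply, smul_eq_mul]
  have hfun2 : (fun q => py u q - py v q) = fun q => Real.sqrt 2 * Real.exp ((u q + v q) / 2) :=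
    funext h2
  have e2 := hL2.unique (hfun2 ▸ hR2)
  have e2' := congrArg (fun L => L X) e2
  simp only [ContinuousLinearMap.sub_apply, ContinuousLinearMap.comp_apply,
    ContinuousLinearMap.apply_apply, ContinuousLinearMap.smul_apply,
    ContinuousLinearMap.add_apply, smul_eq_mul] at e2'
  -- rewrite the partials on the right-hand sides using h1, h2
  have hpx : fderiv ℝ u p X + fderiv ℝ v p X = Real.sqrt 2 * Real.exp ((u p - v p) / 2) := h1 p
  have hpy : fderiv ℝ u p Y - fderiv ℝ v p Y = Real.sqrt 2 * Real.exp ((u p + v p) / 2) := h2 p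
  -- symmetry of second derivatives
  have su := aux_symm u hu p X Y
  have sv := aux_symm v hv p X Y
  -- the goal in terms of second fderiv
  have hgoal : py (px u) p = fderiv ℝ (fderiv ℝ u) p Y X := by
    have hpx' : px u = fun q => fderiv ℝ u q X := rfl
    rw [py, hpx', (aux_hasFDeriv u hu p X).fderiv]
    rfl
  rw [hgoal]
  have hsq : Real.sqrt 2 * Real.sqrt 2 = 2 := Real.mul_self_sqrt (by norm_num)
  have hexp : Real.exp ((u p - v p) / 2) * Real.exp ((u p + v p) / 2) = Real.exp (u p) := by
    rw [← Real.exp_add]; ring_nf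
  -- combine
  have E1 : fderiv ℝ (fderiv ℝ u) p Y X + fderiv ℝ (fderiv ℝ v) p Y X = Real.exp (u p) := by
    rw [e1']
    rw [show (2:ℝ)⁻¹ * (fderiv ℝ u p Y - fderiv ℝ v p Y)
        = (2:ℝ)⁻¹ * (Real.sqrt 2 * Real.exp ((u p + v p) / 2)) by rw [hpy]]
    calc Real.sqrt 2 * (Real.exp ((u p - v p) / 2) *
          ((2:ℝ)⁻¹ * (Real.sqrt 2 * Real.exp ((u p + v p) / 2))))
        = (Real.sqrt 2 * Real.sqrt 2) * (2:ℝ)⁻¹ *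
          (Real.exp ((u p - v p) / 2) * Real.exp ((u p + v p) / 2)) := by ring
      _ = Real.exp (u p) := by rw [hsq, hexp]; ring
  have E2 : fderiv ℝ (fderiv ℝ u) p X Y - fderiv ℝ (fderiv ℝ v) p X Y = Real.exp (u p) := by
    rw [e2']
    rw [show (2:ℝ)⁻¹ * (fderiv ℝ u p X + fderiv ℝ v p X)
        = (2:ℝ)⁻¹ * (Real.sqrt 2 * Real.exp ((u p - v p) / 2)) by rw [hpx]]
    calc Real.sqrt 2 * (Real.exp ((u p + v p) / 2) *
          ((2:ℝ)⁻¹ * (Real.sqrt 2 * Real.exp ((u p - v p) / 2))))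
        = (Real.sqrt 2 * Real.sqrt 2) * (2:ℝ)⁻¹ *
          (Real.exp ((u p - v p) / 2) * Real.exp ((u p + v p) / 2)) := by ring
      _ = Real.exp (u p) := by rw [hsq, hexp]; ring
  linarith [su, sv, E1, E2]
end

section
/- Let u, v : ℝ × ℝ → ℝ be smooth functions satisfying the first-order system u_x + v_x = √2 · e^((u−v)/2) and u_y − v_y = √2 · e^((u+v)/2). Then v satisfies the wave equation v_xy = 0. -/
open Real

lemma px_smooth {f : ℝ × ℝ → ℝ} (hf : ContDiff ℝ (⊤ : ℕ∞) f) : ContDiff ℝ (⊤ : ℕ∞) (px f) :=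
  (hf.fderiv_right (by simp)).clm_apply contDiff_const

lemma py_smooth {f : ℝ × ℝ → ℝ} (hf : ContDiff ℝ (⊤ : ℕ∞) f) : ContDiff ℝ (⊤ : ℕ∞) (py f) :=
  (hf.fderiv_right (by simp)).clm_apply contDiff_const

lemma fderiv_eval {f : ℝ × ℝ → ℝ} (hf : ContDiff ℝ (⊤ : ℕ∞) f) (p w e : ℝ × ℝ) :
    fderiv ℝ (fun q => fderiv ℝ f q w) p e = fderiv ℝ (fderiv ℝ f) p e w := by
  have hd : DifferentiableAt ℝ (fderiv ℝ f) p :=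
    ((hf.fderiv_right (m := (⊤ : ℕ∞)) (by simp)).differentiable (by simp)) p
  have h : HasFDerivAt (fun q => fderiv ℝ f q w)
      ((ContinuousLinearMap.apply ℝ ℝ w).comp (fderiv ℝ (fderiv ℝ f) p)) p :=
    (ContinuousLinearMap.apply ℝ ℝ w).hasFDerivAt.comp p hd.hasFDerivAt
  rw [h.fderiv]; rfl

lemma mixed_symm {f : ℝ × ℝ → ℝ} (hf : ContDiff ℝ (⊤ : ℕ∞) f) (p : ℝ × ℝ) :
    py (px f) p = px (py f) p := by
  have hf' : ∀ q, HasFDerivAt f (fderiv ℝ f q) q :=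
    fun q => ((hf.differentiable (by simp)) q).hasFDerivAt
  have hx : HasFDerivAt (fderiv ℝ f) (fderiv ℝ (fderiv ℝ f) p) p :=
    (((hf.fderiv_right (m := (⊤ : ℕ∞)) (by simp)).differentiable (by simp)) p).hasFDerivAt
  have key := second_derivative_symmetric hf' hx (1, 0) (0, 1)
  unfold py px
  rw [fderiv_eval hf, fderiv_eval hf]
  exact key.symm

/-- If smooth `u, v` satisfy the Bäcklund system
`u_x + v_x = √2 e^((u-v)/2)` and `u_y - v_y = √2 e^((u+v)/2)`,
then `v` satisfies the wave equation `v_xy = 0`. -/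
theorem stmt1 (u v : ℝ × ℝ → ℝ) (hu : ContDiff ℝ (⊤ : ℕ∞) u) (hv : ContDiff ℝ (⊤ : ℕ∞) v)
    (h1 : ∀ p, px u p + px v p = Real.sqrt 2 * Real.exp ((u p - v p) / 2))
    (h2 : ∀ p, py u p - py v p = Real.sqrt 2 * Real.exp ((u p + v p) / 2)) :
    ∀ p, py (px v) p = 0 := by
  intro p
  have hud : Differentiable ℝ u := hu.differentiable (by simp)
  have hvd : Differentiable ℝ v := hv.differentiable (by simp)
  have hpxu : DifferentiableAt ℝ (px u) p := ((px_smooth hu).differentiable (by simp)) p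
  have hpxv : DifferentiableAt ℝ (px v) p := ((px_smooth hv).differentiable (by simp)) p
  have hpyu : DifferentiableAt ℝ (py u) p := ((py_smooth hu).differentiable (by simp)) p
  have hpyv : DifferentiableAt ℝ (py v) p := ((py_smooth hv).differentiable (by simp)) p
  -- derivative of RHS of h1 in y direction
  have hg1 : HasFDerivAt (fun q => (u q - v q) / 2)
      ((2:ℝ)⁻¹ • (fderiv ℝ u p - fderiv ℝ v p)) p := by
    exact (((hud p).hasFDerivAt.sub (hvd p).hasFDerivAt).const_smul (2:ℝ)⁻¹).congr_of_eventuallyEq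
      (Filter.Eventually.of_forall fun q => by simp [div_eq_inv_mul])
  have hg2 : HasFDerivAt (fun q => (u q + v q) / 2)
      ((2:ℝ)⁻¹ • (fderiv ℝ u p + fderiv ℝ v p)) p := by
    exact (((hud p).hasFDerivAt.add (hvd p).hasFDerivAt).const_smul (2:ℝ)⁻¹).congr_of_eventuallyEq
      (Filter.Eventually.of_forall fun q => by simp [div_eq_inv_mul])
  have hR1 : HasFDerivAt (fun q => Real.sqrt 2 * Real.exp ((u q - v q) / 2))
      (Real.sqrt 2 • (Real.exp ((u p - v p) / 2) • ((2:ℝ)⁻¹ • (fderiv ℝ u p - fderiv ℝ v p)))) p := by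
    simpa [smul_smul, mul_comm] using (hg1.exp.const_mul (Real.sqrt 2))
  have hR2 : HasFDerivAt (fun q => Real.sqrt 2 * Real.exp ((u q + v q) / 2))
      (Real.sqrt 2 • (Real.exp ((u p + v p) / 2) • ((2:ℝ)⁻¹ • (fderiv ℝ u p + fderiv ℝ v p)))) p := by
    simpa [smul_smul, mul_comm] using (hg2.exp.const_mul (Real.sqrt 2))
  -- differentiate h1 in y
  have e1 : py (px u) p + py (px v) p
      = Real.sqrt 2 * (Real.exp ((u p - v p) / 2) * ((2:ℝ)⁻¹ * (py u p - py v p))) := by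
    have hfun : (fun q => px u q + px v q) = (fun q => Real.sqrt 2 * Real.exp ((u q - v q) / 2)) :=
      funext h1
    have hL : HasFDerivAt (fun q => px u q + px v q)
        (fderiv ℝ (px u) p + fderiv ℝ (px v) p) p := hpxu.hasFDerivAt.add hpxv.hasFDerivAt
    have := (hfun ▸ hL).unique hR1
    have := congrArg (fun L => L ((0:ℝ), (1:ℝ))) this
    simpa [py, mul_sub, smul_sub] using this
  -- differentiate h2 in x
  have e2 : px (py u) p - px (py v) p
      = Real.sqrt 2 * (Real.exp ((u p + v p) / 2) * ((2:ℝ)⁻¹ * (px u p + px v p))) := by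
    have hfun : (fun q => py u q - py v q) = (fun q => Real.sqrt 2 * Real.exp ((u q + v q) / 2)) :=
      funext h2
    have hL : HasFDerivAt (fun q => py u q - py v q)
        (fderiv ℝ (py u) p - fderiv ℝ (py v) p) p := hpyu.hasFDerivAt.sub hpyv.hasFDerivAt
    have := (hfun ▸ hL).unique hR2
    have := congrArg (fun L => L ((1:ℝ), (0:ℝ))) this
    simpa [px, mul_add, smul_add] using this
  have hs2 : Real.sqrt 2 * Real.sqrt 2 = 2 := Real.mul_self_sqrt (by norm_num)
  have hexp : Real.exp ((u p - v p) / 2) * Real.exp ((u p + v p) / 2) = Real.exp (u p) := by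
    rw [← Real.exp_add]; ring_nf
  rw [h2 p] at e1
  rw [h1 p] at e2
  have E1 : py (px u) p + py (px v) p = Real.exp (u p) := by
    rw [e1]
    linear_combination (Real.exp ((u p - v p) / 2) * Real.exp ((u p + v p) / 2) / 2) * hs2 + hexp
  have E2 : px (py u) p - px (py v) p = Real.exp (u p) := by
    rw [e2]
    linear_combination (Real.exp ((u p - v p) / 2) * Real.exp ((u p + v p) / 2) / 2) * hs2 + hexp
  rw [mixed_symm hu, mixed_symm hv] at E1
  rw [mixed_symm hv]
  linarith
end

section
/- Let u : ℝ × ℝ → ℝ be smooth (at least C³), and let y : ℝ × ℝ → ℝ be smooth and satisfy y_x = −(1/2)u_x + y², y_t = u_xx − u·u_x + 2·u_x·y + 2·u·y². Then the equality of mixed partials y_xt = y_tx holds if and only if u satisfies the Burgers-type equation u_xt = (u²)_xx − 2·u_xxx + 2·(u_x)². -/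
open Real

/-- Partial derivative in the second (t) coordinate. -/
noncomputable def pt (f : ℝ × ℝ → ℝ) (p : ℝ × ℝ) : ℝ := fderiv ℝ f p (0, 1)

/-- For `y` satisfying the Riccati–Bäcklund system
`y_x = -(1/2)u_x + y²`, `y_t = u_xx - u·u_x + 2u_x·y + 2u·y²`,
the equality of mixed partials `y_xt = y_tx` holds if and only if `u` satisfies
the Burgers-type equation `u_xt = (u²)_xx - 2u_xxx + 2(u_x)²`. -/
theorem stmt4 (u y : ℝ × ℝ → ℝ) (hu : ContDiff ℝ (⊤ : ℕ∞) u) (hy : ContDiff ℝ (⊤ : ℕ∞) y)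
    (h1 : ∀ p, px y p = -(1 / 2) * px u p + (y p) ^ 2)
    (h2 : ∀ p, pt y p = px (px u) p - u p * px u p + 2 * px u p * y p
      + 2 * u p * (y p) ^ 2) :
    (∀ p, pt (px y) p = px (pt y) p) ↔
      (∀ p, pt (px u) p = px (px (fun q => (u q) ^ 2)) p
        - 2 * px (px (px u)) p + 2 * (px u p) ^ 2) := by
  have hu1 : ContDiff ℝ (⊤ : ℕ∞) (px u) := (hu.fderiv_right (by simp)).clm_apply contDiff_const
  have hu2 : ContDiff ℝ (⊤ : ℕ∞) (px (px u)) := (hu1.fderiv_right (by simp)).clm_apply contDiff_const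
  have hU : Differentiable ℝ u := hu.differentiable (by simp)
  have hY : Differentiable ℝ y := hy.differentiable (by simp)
  have hX : Differentiable ℝ (px u) := hu1.differentiable (by simp)
  have hXX : Differentiable ℝ (px (px u)) := hu2.differentiable (by simp)
  -- mixed partial pt (px y)
  have e1 : ∀ p, pt (px y) p = -(1/2) * pt (px u) p + 2 * y p * pt y p := by
    intro p
    have hfun : px y = fun q => -(1/2 : ℝ) * px u q + y q * y q := by
      funext q; rw [h1 q, pow_two]
    have hh : HasFDerivAt (fun q => -(1/2 : ℝ) * px u q + y q * y q)
        ((-(1/2 : ℝ)) • fderiv ℝ (px u) p +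
          (y p • fderiv ℝ y p + y p • fderiv ℝ y p)) p :=
      ((hX p).hasFDerivAt.const_mul (-(1/2) : ℝ)).add
        ((hY p).hasFDerivAt.mul (hY p).hasFDerivAt)
    simp only [pt, hfun]
    rw [hh.fderiv]
    simp [smul_eq_mul]
    ring
  -- mixed partial px (pt y)
  have e2 : ∀ p, px (pt y) p = px (px (px u)) p
      - (u p * px (px u) p + px u p * px u p)
      + (2 * px u p * px y p + y p * (2 * px (px u) p))
      + (2 * u p * (y p * px y p + y p * px y p) + (y p * y p) * (2 * px u p)) := by
    intro p
    have hfun : pt y = fun q => px (px u) q - u q * px u q + 2 * px u q * y q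
        + 2 * u q * (y q * y q) := by
      funext q; rw [h2 q, pow_two]
    have hh : HasFDerivAt (fun q => px (px u) q - u q * px u q + 2 * px u q * y q
        + 2 * u q * (y q * y q))
        ((fderiv ℝ (px (px u)) p
          - (u p • fderiv ℝ (px u) p + px u p • fderiv ℝ u p))
          + ((2 * px u p) • fderiv ℝ y p + y p • ((2:ℝ) • fderiv ℝ (px u) p))
          + ((2 * u p) • (y p • fderiv ℝ y p + y p • fderiv ℝ y p)
            + (y p * y p) • ((2:ℝ) • fderiv ℝ u p))) p :=
      ((((hXX p).hasFDerivAt.sub ((hU p).hasFDerivAt.mul (hX p).hasFDerivAt)).add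
        (((hX p).hasFDerivAt.const_mul (2:ℝ)).mul (hY p).hasFDerivAt)).add
        (((hU p).hasFDerivAt.const_mul (2:ℝ)).mul
          ((hY p).hasFDerivAt.mul (hY p).hasFDerivAt)))
    calc px (pt y) p = (fderiv ℝ (fun q => px (px u) q - u q * px u q
          + 2 * px u q * y q + 2 * u q * (y q * y q)) p) (1, 0) := by rw [hfun]; rfl
      _ = _ := by rw [hh.fderiv]; simp [px, smul_eq_mul]; ring
  -- second x-derivative of u²
  have e3a : (fun q => (u q) ^ 2) = fun q => u q * u q := by
    funext q; rw [pow_two]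
  have e3b : px (fun q => u q * u q) = fun q => 2 * u q * px u q := by
    funext p
    have hh : HasFDerivAt (fun q => u q * u q)
        (u p • fderiv ℝ u p + u p • fderiv ℝ u p) p :=
      (hU p).hasFDerivAt.mul (hU p).hasFDerivAt
    calc px (fun q => u q * u q) p
        = (fderiv ℝ (fun q => u q * u q) p) (1, 0) := rfl
      _ = _ := by rw [hh.fderiv]; simp [px, smul_eq_mul]; ring
  have e3 : ∀ p, px (px (fun q => (u q) ^ 2)) p
      = 2 * px u p * px u p + 2 * u p * px (px u) p := by
    intro p
    rw [e3a, e3b]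
    have hh : HasFDerivAt (fun q => 2 * u q * px u q)
        ((2 * u p) • fderiv ℝ (px u) p + px u p • ((2:ℝ) • fderiv ℝ u p)) p :=
      ((hU p).hasFDerivAt.const_mul (2:ℝ)).mul (hX p).hasFDerivAt
    calc px (fun q => 2 * u q * px u q) p
        = (fderiv ℝ (fun q => 2 * u q * px u q) p) (1, 0) := rfl
      _ = _ := by rw [hh.fderiv]; simp [px, smul_eq_mul]; ring
  have key : ∀ p, (pt (px y) p = px (pt y) p) ↔
      (pt (px u) p = px (px (fun q => (u q) ^ 2)) p
        - 2 * px (px (px u)) p + 2 * (px u p) ^ 2) := by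
    intro p
    rw [e1 p, e2 p, e3 p, h1 p, h2 p]
    constructor <;> intro h <;> nlinarith [h]
  exact ⟨fun h p => (key p).1 (h p), fun h p => (key p).2 (h p)⟩
end

section
/- Let θ¹, θ², θ³ be one-forms on a manifold satisfying dθ¹ = −θ² ∧ θ³, dθ² = (1/2)θ¹ ∧ θ², dθ³ = −(1/2)θ¹ ∧ θ³, and let v be a smooth function satisfying dv = θ¹ + e^(−v/2)θ² + e^(v/2)θ³. Then the one-form τ = dv − θ¹ − e^(−v/2)θ² − e^(v/2)θ³ satisfies dτ = 0 when dv is replaced using the constraint; explicitly, d(θ¹ + e^(−v/2)θ² + e^(v/2)θ³) = 0 whenever dv = θ¹ + e^(−v/2)θ² + e^(v/2)θ³ and the three structure equations hold. -/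
open Real

/-- Partial derivative of `f : ℝⁿ → ℝ` in the `i`-th coordinate direction. -/
noncomputable def pd {n : ℕ} (i : Fin n) (f : (Fin n → ℝ) → ℝ) (p : Fin n → ℝ) : ℝ :=
  fderiv ℝ f p (Pi.single i 1)

/-- The `(i,j)` component of the exterior derivative of a one-form on `ℝⁿ`
given by its coefficient functions: `(dω)_{ij} = ∂_i ω_j - ∂_j ω_i`. -/
noncomputable def dF {n : ℕ} (ω : (Fin n → ℝ) → Fin n → ℝ) (i j : Fin n)
    (p : Fin n → ℝ) : ℝ :=
  pd i (fun q => ω q j) p - pd j (fun q => ω q i) p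

/-- The `(i,j)` component of the wedge product of two one-forms on `ℝⁿ`:
`(α ∧ β)_{ij} = α_i β_j - α_j β_i`. -/
def wF {n : ℕ} (α β : (Fin n → ℝ) → Fin n → ℝ) (i j : Fin n) (p : Fin n → ℝ) : ℝ :=
  α p i * β p j - α p j * β p i

/-- If one-forms `θ¹, θ², θ³` satisfy the structure equations `dθ¹ = -θ² ∧ θ³`,
`dθ² = (1/2)θ¹ ∧ θ²`, `dθ³ = -(1/2)θ¹ ∧ θ³`, and the smooth function `v` satisfies
`dv = θ¹ + e^(-v/2)θ² + e^(v/2)θ³`, then the one-form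
`θ¹ + e^(-v/2)θ² + e^(v/2)θ³` is closed. -/
theorem stmt15 {n : ℕ} (θ1 θ2 θ3 : (Fin n → ℝ) → Fin n → ℝ)
    (hθ1 : ∀ i, ContDiff ℝ (⊤ : ℕ∞) (fun p => θ1 p i))
    (hθ2 : ∀ i, ContDiff ℝ (⊤ : ℕ∞) (fun p => θ2 p i))
    (hθ3 : ∀ i, ContDiff ℝ (⊤ : ℕ∞) (fun p => θ3 p i))
    (v : (Fin n → ℝ) → ℝ) (hv : ContDiff ℝ (⊤ : ℕ∞) v)
    (hs1 : ∀ i j p, dF θ1 i j p = -wF θ2 θ3 i j p)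
    (hs2 : ∀ i j p, dF θ2 i j p = (1 / 2) * wF θ1 θ2 i j p)
    (hs3 : ∀ i j p, dF θ3 i j p = -(1 / 2) * wF θ1 θ3 i j p)
    (hdv : ∀ i p, pd i v p =
      θ1 p i + Real.exp (-(v p) / 2) * θ2 p i + Real.exp (v p / 2) * θ3 p i) :
    ∀ i j p, dF (fun q k =>
      θ1 q k + Real.exp (-(v q) / 2) * θ2 q k + Real.exp (v q / 2) * θ3 q k) i j p
      = 0 := by

  intro i j p
  have hvd : DifferentiableAt ℝ v p := hv.differentiable (by simp) p
  -- product/exp rule for the coefficient functions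
  have key : ∀ (l k : Fin n),
      pd l (fun q => θ1 q k + Real.exp (-(v q) / 2) * θ2 q k
        + Real.exp (v q / 2) * θ3 q k) p
      = pd l (fun q => θ1 q k) p
        + Real.exp (-(v p) / 2) * (-(pd l v p) / 2) * θ2 p k
        + Real.exp (-(v p) / 2) * pd l (fun q => θ2 q k) p
        + Real.exp (v p / 2) * (pd l v p / 2) * θ3 p k
        + Real.exp (v p / 2) * pd l (fun q => θ3 q k) p := by
    intro l k
    have h1 : HasFDerivAt (fun q => θ1 q k) (fderiv ℝ (fun q => θ1 q k) p) p :=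
      (((hθ1 k).differentiable (by simp)) p).hasFDerivAt
    have h2 : HasFDerivAt (fun q => θ2 q k) (fderiv ℝ (fun q => θ2 q k) p) p :=
      (((hθ2 k).differentiable (by simp)) p).hasFDerivAt
    have h3 : HasFDerivAt (fun q => θ3 q k) (fderiv ℝ (fun q => θ3 q k) p) p :=
      (((hθ3 k).differentiable (by simp)) p).hasFDerivAt
    have hfv : HasFDerivAt v (fderiv ℝ v p) p := hvd.hasFDerivAt
    have eqm : (fun q => -(v q) / 2) = fun q => (-(1:ℝ)/2) * v q := by
      funext q; ring
    have eqp : (fun q => v q / 2) = fun q => ((1:ℝ)/2) * v q := by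
      funext q; ring
    have hm : HasFDerivAt (fun q => -(v q) / 2) ((-(1:ℝ)/2) • fderiv ℝ v p) p := by
      rw [eqm]; exact hfv.const_mul _
    have hp2 : HasFDerivAt (fun q => v q / 2) (((1:ℝ)/2) • fderiv ℝ v p) p := by
      rw [eqp]; exact hfv.const_mul _
    have hem : HasFDerivAt (fun q => Real.exp (-(v q) / 2))
        (Real.exp (-(v p) / 2) • ((-(1:ℝ)/2) • fderiv ℝ v p)) p := hm.exp
    have hep : HasFDerivAt (fun q => Real.exp (v q / 2))
        (Real.exp (v p / 2) • (((1:ℝ)/2) • fderiv ℝ v p)) p := hp2.exp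
    have hmul2 : HasFDerivAt (fun q => Real.exp (-(v q) / 2) * θ2 q k) _ p := hem.mul h2
    have hmul3 : HasFDerivAt (fun q => Real.exp (v q / 2) * θ3 q k) _ p := hep.mul h3
    have htot : HasFDerivAt (fun q => θ1 q k + Real.exp (-(v q) / 2) * θ2 q k
        + Real.exp (v q / 2) * θ3 q k) _ p := (h1.add hmul2).add hmul3
    have := htot.fderiv
    simp only [pd, this]
    simp [ContinuousLinearMap.add_apply, ContinuousLinearMap.coe_smul',
      Pi.smul_apply, smul_eq_mul]
    ring
  have E1 := hs1 i j p
  have E2 := hs2 i j p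
  have E3 := hs3 i j p
  have hAB : Real.exp (-(v p) / 2) * Real.exp (v p / 2) = 1 := by
    rw [← Real.exp_add]; ring_nf; exact Real.exp_zero
  simp only [dF, wF] at E1 E2 E3 ⊢
  rw [key i j, key j i, hdv i p, hdv j p]
  linear_combination E1 + Real.exp (-(v p) / 2) * E2 + Real.exp (v p / 2) * E3
    + (θ2 p i * θ3 p j - θ2 p j * θ3 p i) * hAB
end

section
/- Let u, v : ℝ² → ℝ be C² functions satisfying u_x + v_x = √2 e^((u−v)/2) and u_y − v_y = √2 e^((u+v)/2). Then (u+v)_xy = e^u and (u−v)_xy = e^u; in particular both the sum relation u_xy = e^u and the difference relation v_xy = 0 follow simultaneously. -/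
/-!
Write `s = u + v` and `d = u - v`, so the system reads `s_x = √2 e^{d/2}` and `d_y = √2 e^{s/2}`.
Differentiating the first equation in `y` and substituting the second gives
`s_xy = √2 e^{d/2} · d_y / 2 = e^{(s+d)/2} = e^u`; symmetrically `d_yx = e^u`, and `d_xy = d_yx`
since `d` is `C²`. Solving for `u_xy = (s_xy + d_xy)/2` and `v_xy = (s_xy - d_xy)/2` finishes.
-/

open Real

section Directional

variable {E F : Type*} [NormedAddCommGroup E] [NormedSpace ℝ E]
  [NormedAddCommGroup F] [NormedSpace ℝ F]

lemma fderiv_fderiv_apply_comm {f : E → F} {x : E} (hf : ContDiff ℝ 2 f) (v w : E) :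
    fderiv ℝ (fun y => fderiv ℝ f y v) x w = fderiv ℝ (fun y => fderiv ℝ f y w) x v := by
  have hdf : DifferentiableAt ℝ (fderiv ℝ f) x :=
    ((hf.fderiv_right (m := 1) le_rfl).differentiable one_ne_zero).differentiableAt
  simp only [fderiv_clm_apply hdf (differentiableAt_const _), fderiv_fun_const, Pi.zero_apply,
    ContinuousLinearMap.comp_zero, zero_add, ContinuousLinearMap.flip_apply]
  exact hf.contDiffAt.isSymmSndFDerivAt (by simp) w v

lemma fderiv_const_mul_exp_half_apply {w : E → ℝ} {x : E} (hw : DifferentiableAt ℝ w x)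
    (c : ℝ) (e : E) :
    fderiv ℝ (fun y => c * exp (w y / 2)) x e = c * exp (w x / 2) * (fderiv ℝ w x e / 2) := by
  simp only [div_eq_mul_inv]
  rw [((hw.hasFDerivAt.mul_const _).exp.const_mul c).fderiv]
  simp only [smul_apply, smul_eq_mul]
  ring

lemma fderiv_fderiv_apply_eq_exp_of_backlund {s d : E → ℝ} {x : E} (hd : DifferentiableAt ℝ d x)
    {e₁ e₂ : E} (hs : ∀ y, fderiv ℝ s y e₁ = √2 * exp (d y / 2))
    (hde : fderiv ℝ d x e₂ = √2 * exp (s x / 2)) :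
    fderiv ℝ (fun y => fderiv ℝ s y e₁) x e₂ = exp ((s x + d x) / 2) := by
  have hsqrt : √2 * √2 = 2 := mul_self_sqrt zero_le_two
  simp only [hs, fderiv_const_mul_exp_half_apply hd, hde]
  calc √2 * exp (d x / 2) * (√2 * exp (s x / 2) / 2)
      = (√2 * √2) / 2 * (exp (s x / 2) * exp (d x / 2)) := by ring
    _ = exp ((s x + d x) / 2) := by rw [hsqrt, ← exp_add]; ring_nf

end Directional

section Partials

variable {f g : ℝ × ℝ → ℝ} {p : ℝ × ℝ}

lemma px_add (hf : DifferentiableAt ℝ f p) (hg : DifferentiableAt ℝ g p) :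
    px (fun q => f q + g q) p = px f p + px g p := by
  simp only [px, fderiv_fun_add hf hg, add_apply]

lemma px_sub (hf : DifferentiableAt ℝ f p) (hg : DifferentiableAt ℝ g p) :
    px (fun q => f q - g q) p = px f p - px g p := by
  simp only [px, fderiv_fun_sub hf hg, sub_apply]

lemma py_add (hf : DifferentiableAt ℝ f p) (hg : DifferentiableAt ℝ g p) :
    py (fun q => f q + g q) p = py f p + py g p := by
  simp only [py, fderiv_fun_add hf hg, add_apply]

lemma py_sub (hf : DifferentiableAt ℝ f p) (hg : DifferentiableAt ℝ g p) :
    py (fun q => f q - g q) p = py f p - py g p := by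
  simp only [py, fderiv_fun_sub hf hg, sub_apply]

lemma differentiableAt_px (hf : ContDiff ℝ 2 f) : DifferentiableAt ℝ (px f) p :=
  (((hf.fderiv_right (m := 1) le_rfl).differentiable one_ne_zero).clm_apply
    (differentiable_const _)).differentiableAt

lemma py_px_add (hf : ContDiff ℝ 2 f) (hg : ContDiff ℝ 2 g) :
    py (px (fun q => f q + g q)) p = py (px f) p + py (px g) p := by
  have hpx : px (fun q => f q + g q) = fun q => px f q + px g q := funext fun q =>
    px_add (hf.differentiable two_ne_zero q) (hg.differentiable two_ne_zero q)
  rw [hpx, py_add (differentiableAt_px hf) (differentiableAt_px hg)]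

lemma py_px_sub (hf : ContDiff ℝ 2 f) (hg : ContDiff ℝ 2 g) :
    py (px (fun q => f q - g q)) p = py (px f) p - py (px g) p := by
  have hpx : px (fun q => f q - g q) = fun q => px f q - px g q := funext fun q =>
    px_sub (hf.differentiable two_ne_zero q) (hg.differentiable two_ne_zero q)
  rw [hpx, py_sub (differentiableAt_px hf) (differentiableAt_px hg)]

lemma py_px_comm (hf : ContDiff ℝ 2 f) : py (px f) p = px (py f) p :=
  fderiv_fderiv_apply_comm hf _ _

end Partials

/-- If C² functions `u, v` satisfy the Bäcklund system, then
`(u+v)_xy = e^u` and `(u-v)_xy = e^u`, and in particular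
the Liouville equation `u_xy = e^u` and the wave equation `v_xy = 0` hold. -/
theorem stmt19 (u v : ℝ × ℝ → ℝ) (hu : ContDiff ℝ 2 u) (hv : ContDiff ℝ 2 v)
    (h1 : ∀ p, px u p + px v p = Real.sqrt 2 * Real.exp ((u p - v p) / 2))
    (h2 : ∀ p, py u p - py v p = Real.sqrt 2 * Real.exp ((u p + v p) / 2)) :
    ∀ p, py (px (fun q => u q + v q)) p = Real.exp (u p) ∧
      py (px (fun q => u q - v q)) p = Real.exp (u p) ∧
      py (px u) p = Real.exp (u p) ∧
      py (px v) p = 0 := by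
  intro p
  have hud := hu.differentiable two_ne_zero
  have hvd := hv.differentiable two_ne_zero
  have hsum_x : ∀ q, px (fun q => u q + v q) q = √2 * exp ((u q - v q) / 2) := fun q =>
    (px_add (hud q) (hvd q)).trans (h1 q)
  have hdiff_y : ∀ q, py (fun q => u q - v q) q = √2 * exp ((u q + v q) / 2) := fun q =>
    (py_sub (hud q) (hvd q)).trans (h2 q)
  have hsum : py (px (fun q => u q + v q)) p = exp (u p) :=
    calc py (px (fun q => u q + v q)) p = exp ((u p + v p + (u p - v p)) / 2) :=
          fderiv_fderiv_apply_eq_exp_of_backlund ((hud p).sub (hvd p)) hsum_x (hdiff_y p)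
      _ = exp (u p) := by ring_nf
  have hdiff : py (px (fun q => u q - v q)) p = exp (u p) :=
    calc py (px (fun q => u q - v q)) p = px (py (fun q => u q - v q)) p := py_px_comm (hu.sub hv)
      _ = exp ((u p - v p + (u p + v p)) / 2) :=
          fderiv_fderiv_apply_eq_exp_of_backlund ((hud p).add (hvd p)) hdiff_y (hsum_x p)
      _ = exp (u p) := by ring_nf
  have hsplit_add := py_px_add hu hv (p := p)
  have hsplit_sub := py_px_sub hu hv (p := p)
  exact ⟨hsum, hdiff, by linarith, by linarith⟩
end
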